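/- Let $f:\mathbb{R}\to\mathbb{R}$ be bounded and uniformly continuous. Then for every $t>0$ and $x\in\mathbb{R}$, $|E_t(f)(x) - f(x)| \le 2\,\omega_1\left(f; \frac{1}{t}\right)$, where $E_t(f)(x) = \int_{-\infty}^{+\infty} f(x-v) \cdot \frac{t\, e^{-t|v|}}{2}\, dv$. -/

import Mathlib

open MeasureTheory Filter

/-- The modulus of continuity `ω₁(f; δ) = sup {|f x - f y| : |x - y| ≤ δ}`. -/
noncomputable def omega1 (f : ℝ → ℝ) (δ : ℝ) : ℝ :=
  sSup {d : ℝ | ∃ x y : ℝ, |x - y| ≤ δ ∧ d = |f x - f y|}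

/-- The exponential convolution operator. -/
noncomputable def expConv (f : ℝ → ℝ) (t x : ℝ) : ℝ :=
  ∫ v : ℝ, f (x - v) * (t * Real.exp (-t * |v|) / 2)

/-! `expConv f t x - f x` is the average of `f (x - v) - f x` against the probability density
`t e^{-t|v|} / 2`. Cutting `[x - v, x]` into `⌈t|v|⌉` pieces of length at most `1/t` gives
`|f (x - v) - f x| ≤ (1 + t|v|) ω₁(f; 1/t)`, and the density integrates `1 + t|v|` to
`1 + 1 = 2`. Uniform continuity is what makes `ω₁(f; δ)` finite, so that this bound also
dominates the integrand. -/

open Set Real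
open scoped Nat

section ModulusOfContinuity

variable {f : ℝ → ℝ} {δ C : ℝ}

lemma abs_sub_le_nat_mul_of_abs_sub_le (h : ∀ a b, |a - b| ≤ δ → |f a - f b| ≤ C) (n : ℕ)
    {a b : ℝ} (hab : |a - b| ≤ n * δ) : |f a - f b| ≤ n * C := by
  have telescope : ∀ (m : ℕ) (u : ℝ), |u| ≤ δ → |f (b + m * u) - f b| ≤ m * C := by
    intro m u hu
    induction m with
    | zero => simp
    | succ m ih =>
      calc |f (b + (m + 1 : ℕ) * u) - f b|
          ≤ |f (b + (m + 1 : ℕ) * u) - f (b + m * u)| + |f (b + m * u) - f b| :=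
            abs_sub_le _ _ _
        _ ≤ C + m * C := by
            refine add_le_add (h _ _ ?_) ih
            push_cast
            rwa [add_one_mul, ← add_assoc, add_sub_cancel_left]
        _ = (m + 1 : ℕ) * C := by push_cast; ring
  rcases n.eq_zero_or_pos with rfl | hn
  · obtain rfl : a = b := by simpa [sub_eq_zero] using hab
    simp
  · have hn' : (0 : ℝ) < n := by exact_mod_cast hn
    convert telescope n ((a - b) / n) ?_ using 3
    · rw [mul_div_cancel₀ _ hn'.ne', add_sub_cancel]
    · rwa [abs_div, Nat.abs_cast, div_le_iff₀ hn', mul_comm]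

lemma abs_sub_le_one_add_div_mul_of_abs_sub_le (hδ : 0 < δ) (hC : 0 ≤ C)
    (h : ∀ a b, |a - b| ≤ δ → |f a - f b| ≤ C) (a b : ℝ) :
    |f a - f b| ≤ (1 + |a - b| / δ) * C := by
  set n := ⌈|a - b| / δ⌉₊
  have hn : |a - b| ≤ n * δ := (div_le_iff₀ hδ).mp (Nat.le_ceil _)
  calc |f a - f b| ≤ n * C := abs_sub_le_nat_mul_of_abs_sub_le h n hn
    _ ≤ (1 + |a - b| / δ) * C := by
      gcongr
      linarith [Nat.ceil_lt_add_one (div_nonneg (abs_nonneg (a - b)) hδ.le)]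

lemma UniformContinuous.bddAbove_abs_sub (hf : UniformContinuous f) (δ : ℝ) :
    BddAbove {d : ℝ | ∃ x y : ℝ, |x - y| ≤ δ ∧ d = |f x - f y|} := by
  obtain ⟨η, hη, hfη⟩ := Metric.uniformContinuous_iff.mp hf 1 one_pos
  have hstep : ∀ a b, |a - b| ≤ η / 2 → |f a - f b| ≤ 1 := fun a b hab =>
    (hfη (lt_of_le_of_lt hab (half_lt_self hη))).le
  refine ⟨1 + δ / (η / 2), ?_⟩
  rintro _ ⟨x, y, hxy, rfl⟩
  calc |f x - f y| ≤ (1 + |x - y| / (η / 2)) * 1 :=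
        abs_sub_le_one_add_div_mul_of_abs_sub_le (half_pos hη) zero_le_one hstep x y
    _ ≤ 1 + δ / (η / 2) := by rw [mul_one]; gcongr

lemma UniformContinuous.abs_sub_le_omega1 (hf : UniformContinuous f) {a b : ℝ}
    (hab : |a - b| ≤ δ) : |f a - f b| ≤ omega1 f δ :=
  le_csSup (hf.bddAbove_abs_sub δ) ⟨a, b, hab, rfl⟩

lemma UniformContinuous.abs_sub_le_one_add_div_mul_omega1 (hf : UniformContinuous f)
    (hδ : 0 < δ) (a b : ℝ) : |f a - f b| ≤ (1 + |a - b| / δ) * omega1 f δ := by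
  have hω : 0 ≤ omega1 f δ := by
    simpa using hf.abs_sub_le_omega1 (a := 0) (b := 0) (by simpa using hδ.le)
  exact abs_sub_le_one_add_div_mul_of_abs_sub_le hδ hω (fun _ _ => hf.abs_sub_le_omega1) a b

end ModulusOfContinuity

lemma abs_integral_mul_sub_le {α : Type*} [MeasurableSpace α] {μ : Measure α}
    {g k m : α → ℝ} {c : ℝ} (hg : AEStronglyMeasurable g μ) (hk : Integrable k μ)
    (hk_nonneg : ∀ a, 0 ≤ k a) (hk_one : ∫ a, k a ∂μ = 1)
    (hm : Integrable (fun a => m a * k a) μ) (hgm : ∀ a, |g a - c| ≤ m a) :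
    |∫ a, g a * k a ∂μ - c| ≤ ∫ a, m a * k a ∂μ := by
  have hbound : ∀ a, ‖(g a - c) * k a‖ ≤ m a * k a := fun a => by
    rw [Real.norm_eq_abs, abs_mul, abs_of_nonneg (hk_nonneg a)]
    exact mul_le_mul_of_nonneg_right (hgm a) (hk_nonneg a)
  have hdiff : Integrable (fun a => (g a - c) * k a) μ :=
    hm.mono' ((hg.sub aestronglyMeasurable_const).mul hk.aestronglyMeasurable)
      (Eventually.of_forall hbound)
  have hsplit : ∫ a, g a * k a ∂μ - c = ∫ a, (g a - c) * k a ∂μ := by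
    have : ∫ a, g a * k a ∂μ = ∫ a, (g a - c) * k a ∂μ + ∫ a, c * k a ∂μ := by
      rw [← integral_add hdiff (hk.const_mul c)]
      congr 1 with a
      ring
    rw [this, integral_const_mul, hk_one, mul_one, add_sub_cancel_right]
  rw [hsplit]
  exact norm_integral_le_of_norm_le hm (Eventually.of_forall hbound)

lemma integrable_comp_abs {f : ℝ → ℝ} (hf : IntegrableOn f (Ioi 0)) :
    Integrable (fun x => f |x|) := by
  have hIoi : IntegrableOn (fun x => f |x|) (Ioi 0) :=
    hf.congr_fun (fun x hx => by rw [abs_of_pos hx]) measurableSet_Ioi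
  have hIic : IntegrableOn (fun x => f |x|) (Iic 0) := by
    have hneg : MeasurableEmbedding (fun x : ℝ => -x) := (Homeomorph.neg ℝ).measurableEmbedding
    rw [← Measure.map_neg_eq_self (volume : Measure ℝ), hneg.integrableOn_map_iff]
    simp_rw [Function.comp_def, abs_neg, neg_preimage, neg_Iic, neg_zero]
    exact Iff.mpr integrableOn_Ici_iff_integrableOn_Ioi hIoi
  simpa [Iic_union_Ioi] using hIic.union hIoi

section ExpKernel

variable {t : ℝ}

/-- `expConv f t x` unfolds to `∫ v, f (x - v) * expKernel t v`. -/
noncomputable def expKernel (t v : ℝ) : ℝ := t * exp (-t * |v|) / 2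

lemma integrableOn_pow_mul_exp_neg_mul_Ioi (n : ℕ) (ht : 0 < t) :
    IntegrableOn (fun u => u ^ n * exp (-t * u)) (Ioi 0) := by
  simpa using integrableOn_rpow_mul_exp_neg_mul_rpow (s := n)
    (by linarith [n.cast_nonneg (α := ℝ)]) one_pos ht

lemma integral_pow_mul_exp_neg_mul_Ioi (n : ℕ) (ht : 0 < t) :
    ∫ u in Ioi 0, u ^ n * exp (-t * u) = n ! / t ^ (n + 1) := by
  have := integral_rpow_mul_exp_neg_mul_Ioi (a := n + 1) (by positivity) ht
  rw [Real.Gamma_nat_eq_factorial, add_sub_cancel_right] at this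
  simp_rw [rpow_natCast, ← neg_mul] at this
  rw [this, ← Nat.cast_add_one, rpow_natCast, one_div_pow, one_div_mul_eq_div]

lemma expKernel_nonneg (ht : 0 ≤ t) (v : ℝ) : 0 ≤ expKernel t v := by
  unfold expKernel; positivity

lemma integrable_pow_abs_mul_expKernel (n : ℕ) (ht : 0 < t) :
    Integrable (fun v => |v| ^ n * expKernel t v) :=
  integrable_comp_abs (f := fun u => u ^ n * (t * exp (-t * u) / 2)) <|
    IntegrableOn.congr_fun ((integrableOn_pow_mul_exp_neg_mul_Ioi n ht).const_mul (t / 2))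
      (fun u _ => by ring) measurableSet_Ioi

lemma integral_pow_abs_mul_expKernel (n : ℕ) (ht : 0 < t) :
    ∫ v, |v| ^ n * expKernel t v = n ! / t ^ n := by
  calc ∫ v, |v| ^ n * expKernel t v
      = 2 * ∫ u in Ioi 0, t / 2 * (u ^ n * exp (-t * u)) := by
        unfold expKernel
        rw [integral_comp_abs (f := fun u => u ^ n * (t * exp (-t * u) / 2))]
        congr 2 with u
        ring
    _ = n ! / t ^ n := by
        rw [integral_const_mul, integral_pow_mul_exp_neg_mul_Ioi n ht]
        field_simp
        ring

lemma integrable_expKernel (ht : 0 < t) : Integrable (expKernel t) := by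
  simpa using integrable_pow_abs_mul_expKernel 0 ht

lemma integral_expKernel (ht : 0 < t) : ∫ v, expKernel t v = 1 := by
  simpa using integral_pow_abs_mul_expKernel 0 ht

lemma integrable_one_add_mul_abs_mul_expKernel (ht : 0 < t) :
    Integrable fun v => (1 + t * |v|) * expKernel t v := by
  refine ((integrable_expKernel ht).add
    ((integrable_pow_abs_mul_expKernel 1 ht).const_mul t)).congr (Eventually.of_forall fun v => ?_)
  simp only [Pi.add_apply, pow_one]
  ring

lemma integral_one_add_mul_abs_mul_expKernel (ht : 0 < t) :
    ∫ v, (1 + t * |v|) * expKernel t v = 2 := by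
  calc ∫ v, (1 + t * |v|) * expKernel t v
      = (∫ v, expKernel t v) + ∫ v, t * (|v| ^ 1 * expKernel t v) := by
        rw [← integral_add (integrable_expKernel ht)
          ((integrable_pow_abs_mul_expKernel 1 ht).const_mul t)]
        congr 1 with v
        ring
    _ = 2 := by
        rw [integral_const_mul, integral_expKernel ht, integral_pow_abs_mul_expKernel 1 ht]
        field_simp
        norm_num

end ExpKernel

theorem exp_conv_approx_general
    (f : ℝ → ℝ)
    (hf_uc : UniformContinuous f) :
    ∀ t > (0 : ℝ), ∀ x : ℝ, |expConv f t x - f x| ≤ 2 * omega1 f (1 / t) := by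
  intro t ht x
  have hmod : ∀ v, |f (x - v) - f x| ≤ omega1 f (1 / t) * (1 + t * |v|) := fun v => by
    simpa [mul_comm] using hf_uc.abs_sub_le_one_add_div_mul_omega1 (one_div_pos.mpr ht) (x - v) x
  have hmajorant : Integrable fun v => omega1 f (1 / t) * (1 + t * |v|) * expKernel t v := by
    simpa only [mul_assoc] using (integrable_one_add_mul_abs_mul_expKernel ht).const_mul _
  calc |expConv f t x - f x| ≤ ∫ v, omega1 f (1 / t) * (1 + t * |v|) * expKernel t v :=
        abs_integral_mul_sub_le
          (hf_uc.continuous.comp (continuous_const.sub continuous_id)).aestronglyMeasurable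
          (integrable_expKernel ht) (expKernel_nonneg ht.le) (integral_expKernel ht) hmajorant hmod
    _ = 2 * omega1 f (1 / t) := by
        simp only [mul_assoc, integral_const_mul, integral_one_add_mul_abs_mul_expKernel ht]
        ring

theorem exp_conv_approx
    (f : ℝ → ℝ)
    (hf_bdd : ∃ M : ℝ, ∀ x : ℝ, |f x| ≤ M)
    (hf_uc : UniformContinuous f) :
    ∀ t > (0 : ℝ), ∀ x : ℝ, |expConv f t x - f x| ≤ 2 * omega1 f (1 / t) :=
  exp_conv_approx_general f hf_uc
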